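/- Let 1 < p < ∞ and N > 8 an integer. Then ∫_0^{π/4} (∑_{s=2}^{N+1} 2^{-s(1-1/p)} min{2^s, |sin(2x)|^{-1}})^p dx ≤ C_p N for a constant C_p independent of N. -/

import Mathlib

open MeasureTheory

/-! With `a = 1/p`, the `s`-th term equals `min ((2^a)^s) ((2^(a-1))^s T)` where
`T = |sin 2x|⁻¹`, so the sum is dominated by two geometric series meeting at `2^s ≈ T`, which
gives `≲ T^a`. Since only `s ≤ N + 1` occurs, `T` may be capped at `2^(N+1)`, and as
`T ≤ x⁻¹` on `(0, π/4]` the integrand is `≲ min (2^(N+1)) x⁻¹`, whose integral is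
`1 + log (2^(N+1) π/4) ≲ N`. -/

open Real Finset Set

lemma sum_min_pow_le {r q T : ℝ} (hr : 1 < r) (hq0 : 0 ≤ q) (hq1 : q < 1) (hT : 0 ≤ T)
    (S : Finset ℕ) (k : ℕ) :
    ∑ s ∈ S, min (r ^ s) (q ^ s * T) ≤ r ^ (k + 1) / (r - 1) + q ^ (k + 1) * T / (1 - q) := by
  obtain ⟨n, hn⟩ := S.exists_nat_subset_range
  have hsub : S ⊆ range (k + 1 + n) := hn.trans (range_subset_range.mpr (by omega))
  calc ∑ s ∈ S, min (r ^ s) (q ^ s * T)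
      ≤ ∑ s ∈ range (k + 1 + n), min (r ^ s) (q ^ s * T) :=
        sum_le_sum_of_subset_of_nonneg hsub fun s _ _ => by positivity
    _ = ∑ s ∈ range (k + 1), min (r ^ s) (q ^ s * T)
          + ∑ s ∈ Ico (k + 1) (k + 1 + n), min (r ^ s) (q ^ s * T) :=
        (sum_range_add_sum_Ico _ (by omega)).symm
    _ ≤ ∑ s ∈ range (k + 1), r ^ s + (∑ s ∈ Ico (k + 1) (k + 1 + n), q ^ s) * T := by
        rw [sum_mul]
        gcongr with s _ s _
        exacts [min_le_left _ _, min_le_right _ _]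
    _ ≤ r ^ (k + 1) / (r - 1) + q ^ (k + 1) / (1 - q) * T := by
        rw [geom_sum_eq hr.ne']
        gcongr
        · linarith
        · exact geom_sum_Ico_le_of_lt_one hq0 hq1
    _ = _ := by ring

lemma exists_sum_two_rpow_mul_min_le {a : ℝ} (ha0 : 0 < a) (ha1 : a < 1) :
    ∃ C, 0 ≤ C ∧ ∀ (S : Finset ℕ) (T : ℝ), 1 ≤ T →
      ∑ s ∈ S, (2 : ℝ) ^ (-(s : ℝ) * (1 - a)) * min ((2 : ℝ) ^ (s : ℝ)) T ≤ C * T ^ a := by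
  set r : ℝ := 2 ^ a
  set q : ℝ := 2 ^ (a - 1)
  have hr : 1 < r := one_lt_rpow one_lt_two ha0
  have hq0 : 0 ≤ q := by positivity
  have hq1 : q < 1 := rpow_lt_one_of_one_lt_of_neg one_lt_two (by linarith)
  refine ⟨r / (r - 1) + 1 / (1 - q),
    add_nonneg (div_nonneg (by linarith) (by linarith)) (div_nonneg zero_le_one (by linarith)),
    fun S T hT => ?_⟩
  have hT0 : 0 < T := by linarith
  have hterm : ∀ s : ℕ, (2 : ℝ) ^ (-(s : ℝ) * (1 - a)) * min ((2 : ℝ) ^ (s : ℝ)) T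
      = min (r ^ s) (q ^ s * T) := by
    intro s
    rw [mul_min_of_nonneg _ _ (by positivity), ← rpow_add two_pos,
      show -(s : ℝ) * (1 - a) + s = a * s by ring,
      show -(s : ℝ) * (1 - a) = (a - 1) * s by ring,
      rpow_mul_natCast zero_le_two, rpow_mul_natCast zero_le_two]
  obtain ⟨k, hkT, hTk⟩ := exists_nat_pow_near hT one_lt_two
  have hr_pow : r ^ (k + 1) ≤ r * T ^ a := by
    rw [pow_succ', ← rpow_mul_natCast zero_le_two, mul_comm a, rpow_natCast_mul zero_le_two]
    gcongr
  have hq_pow : q ^ (k + 1) * T ≤ T ^ a := by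
    rw [← rpow_mul_natCast zero_le_two, mul_comm (a - 1), rpow_natCast_mul zero_le_two]
    calc ((2 : ℝ) ^ (k + 1)) ^ (a - 1) * T ≤ T ^ (a - 1) * T :=
          mul_le_mul_of_nonneg_right (rpow_le_rpow_of_nonpos hT0 hTk.le (by linarith)) hT0.le
      _ = T ^ a := by rw [← rpow_add_one hT0.ne', sub_add_cancel]
  calc ∑ s ∈ S, (2 : ℝ) ^ (-(s : ℝ) * (1 - a)) * min ((2 : ℝ) ^ (s : ℝ)) T
      = ∑ s ∈ S, min (r ^ s) (q ^ s * T) := sum_congr rfl fun s _ => hterm s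
    _ ≤ r ^ (k + 1) / (r - 1) + q ^ (k + 1) * T / (1 - q) :=
        sum_min_pow_le hr hq0 hq1 hT0.le S k
    _ ≤ r * T ^ a / (r - 1) + T ^ a / (1 - q) := by
        gcongr
    _ = _ := by ring

lemma exists_rpow_sum_two_rpow_mul_min_le {p : ℝ} (hp : 1 < p) :
    ∃ C, 0 ≤ C ∧ ∀ (N : ℕ) (T : ℝ), 1 ≤ T →
      (∑ s ∈ Finset.Icc 2 (N + 1),
          (2 : ℝ) ^ (-(s : ℝ) * (1 - 1/p)) * min ((2 : ℝ) ^ (s : ℝ)) T) ^ p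
        ≤ C * min ((2 : ℝ) ^ (N + 1)) T := by
  have hp0 : 0 < p := by linarith
  obtain ⟨C, hC0, hC⟩ := exists_sum_two_rpow_mul_min_le (a := 1 / p) (by positivity)
    ((div_lt_one hp0).mpr hp)
  refine ⟨C ^ p, rpow_nonneg hC0 _, fun N T hT => ?_⟩
  set A : ℝ := 2 ^ (N + 1)
  have hcap : ∀ s ∈ Finset.Icc 2 (N + 1),
      min ((2 : ℝ) ^ (s : ℝ)) T = min ((2 : ℝ) ^ (s : ℝ)) (min A T) := by
    intro s hs
    have h2s : (2 : ℝ) ^ (s : ℝ) ≤ A := by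
      rw [rpow_natCast]
      exact pow_le_pow_right₀ one_le_two (Finset.mem_Icc.mp hs).2
    rw [← min_assoc, min_eq_left h2s]
  have hAT : 1 ≤ min A T := le_min (one_le_pow₀ one_le_two) hT
  calc (∑ s ∈ Finset.Icc 2 (N + 1),
        (2 : ℝ) ^ (-(s : ℝ) * (1 - 1/p)) * min ((2 : ℝ) ^ (s : ℝ)) T) ^ p
      = (∑ s ∈ Finset.Icc 2 (N + 1),
          (2 : ℝ) ^ (-(s : ℝ) * (1 - 1/p)) * min ((2 : ℝ) ^ (s : ℝ)) (min A T)) ^ p := by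
        rw [sum_congr rfl fun s hs => congrArg _ (hcap s hs)]
    _ ≤ (C * (min A T) ^ (1 / p)) ^ p :=
        rpow_le_rpow (sum_nonneg fun s _ => by positivity) (hC _ _ hAT) hp0.le
    _ = C ^ p * min A T := by
        rw [mul_rpow hC0 (by positivity), ← rpow_mul (by positivity),
          one_div_mul_cancel hp0.ne', rpow_one]

lemma inv_abs_sin_two_mul_mem_Icc {x : ℝ} (hx : x ∈ Ioc 0 (π / 4)) :
    |sin (2 * x)|⁻¹ ∈ Icc 1 x⁻¹ := by
  have hx_sin : x ≤ sin (2 * x) :=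
    calc x ≤ 2 / π * (2 * x) := by
          rw [div_mul_eq_mul_div, le_div_iff₀ pi_pos]
          nlinarith [pi_le_four, hx.1]
      _ ≤ sin (2 * x) := mul_le_sin (by linarith [hx.1]) (by linarith [hx.2])
  have hsin : 0 < sin (2 * x) := hx.1.trans_le hx_sin
  rw [abs_of_pos hsin]
  exact ⟨(one_le_inv₀ hsin).mpr (sin_le_one _), inv_anti₀ hx.1 hx_sin⟩

lemma integrableOn_min_inv {A : ℝ} (hA : 0 ≤ A) (b : ℝ) :
    IntegrableOn (fun x => min A x⁻¹) (Ioc 0 b) := by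
  refine Measure.integrableOn_of_bounded (M := A) measure_Ioc_lt_top.ne
    (measurable_const.min measurable_inv).aestronglyMeasurable ?_
  filter_upwards [ae_restrict_mem measurableSet_Ioc] with x hx
  rw [norm_of_nonneg (le_min hA (inv_nonneg.mpr hx.1.le))]
  exact min_le_left _ _

lemma integral_Ioc_min_inv {A b : ℝ} (hA : 0 < A) (hb : A⁻¹ ≤ b) :
    ∫ x in Ioc 0 b, min A x⁻¹ = 1 + log (A * b) := by
  have hc : 0 < A⁻¹ := inv_pos.mpr hA
  rw [← Ioc_union_Ioc_eq_Ioc hc.le hb, setIntegral_union (Ioc_disjoint_Ioc_of_le le_rfl)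
    measurableSet_Ioc ((integrableOn_min_inv hA.le b).mono_set (Ioc_subset_Ioc_right hb))
    ((integrableOn_min_inv hA.le b).mono_set (Ioc_subset_Ioc_left hc.le))]
  have h_const : EqOn (fun x => min A x⁻¹) (fun _ => A) (Ioc 0 A⁻¹) := fun x hx =>
    min_eq_left ((le_inv_comm₀ hx.1 hA).mp hx.2)
  have h_inv : EqOn (fun x => min A x⁻¹) (fun x => x⁻¹) (Ioc A⁻¹ b) := fun x hx =>
    min_eq_right ((inv_le_comm₀ (hc.trans hx.1) hA).mpr hx.1.le)
  rw [setIntegral_congr_fun measurableSet_Ioc h_const,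
    setIntegral_congr_fun measurableSet_Ioc h_inv, setIntegral_const, volume_real_Ioc, sub_zero,
    max_eq_left hc.le, smul_eq_mul, inv_mul_cancel₀ hA.ne', ← intervalIntegral.integral_of_le hb,
    integral_inv_of_pos hc (hc.trans_le hb), div_inv_eq_mul, mul_comm b]

lemma integral_Ioc_min_two_pow_inv_le {N : ℕ} (hN : 1 ≤ N) :
    ∫ x in Ioc 0 (π / 4), min ((2 : ℝ) ^ (N + 1)) x⁻¹ ≤ 3 * N := by
  set A : ℝ := 2 ^ (N + 1)
  have hA : (4 : ℝ) ≤ A :=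
    calc (4 : ℝ) = 2 ^ 2 := by norm_num
      _ ≤ A := pow_le_pow_right₀ one_le_two (by omega)
  have hA_inv : A⁻¹ ≤ π / 4 := by
    have : A⁻¹ ≤ 4⁻¹ := inv_anti₀ (by norm_num) hA
    linarith [pi_gt_three]
  have hN1 : (1 : ℝ) ≤ N := by exact_mod_cast hN
  calc ∫ x in Ioc 0 (π / 4), min A x⁻¹ = 1 + log (A * (π / 4)) :=
        integral_Ioc_min_inv (by positivity) hA_inv
    _ ≤ 1 + log A := by
        gcongr
        exact mul_le_of_le_one_right (by positivity) (by linarith [pi_le_four])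
    _ = 1 + (N + 1) * log 2 := by rw [log_pow]; push_cast; ring
    _ ≤ 3 * N := by nlinarith [log_two_lt_d9]

/-- **The key integral estimate for the `L^p` counterexample.** For `1 < p < ∞` there is a
constant `C_p` such that for all integers `N > 8`,
`∫_0^{π/4} (∑_{s=2}^{N+1} 2^{-s(1-1/p)} min{2^s, |sin(2x)|⁻¹})^p dx ≤ C_p N`. -/
theorem dyadic_integral_estimate (p : ℝ) (hp : 1 < p) :
    ∃ C : ℝ, ∀ N : ℕ, 8 < N →
      (∫ x in Set.Ioc (0 : ℝ) (Real.pi / 4),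
          (∑ s ∈ Finset.Icc 2 (N + 1),
              (2 : ℝ) ^ (-(s : ℝ) * (1 - 1/p)) *
                min ((2 : ℝ) ^ (s : ℝ)) |Real.sin (2 * x)|⁻¹) ^ p) ≤ C * N := by
  obtain ⟨C, hC0, hC⟩ := exists_rpow_sum_two_rpow_mul_min_le hp
  refine ⟨C * 3, fun N hN => ?_⟩
  have hbound : ∀ x ∈ Ioc 0 (π / 4),
      (∑ s ∈ Finset.Icc 2 (N + 1), (2 : ℝ) ^ (-(s : ℝ) * (1 - 1/p)) *
        min ((2 : ℝ) ^ (s : ℝ)) |sin (2 * x)|⁻¹) ^ p ≤ C * min ((2 : ℝ) ^ (N + 1)) x⁻¹ := by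
    intro x hx
    obtain ⟨h1, hx_inv⟩ := inv_abs_sin_two_mul_mem_Icc hx
    exact (hC N _ h1).trans (mul_le_mul_of_nonneg_left (min_le_min_left _ hx_inv) hC0)
  calc _ ≤ ∫ x in Ioc (0 : ℝ) (π / 4), C * min ((2 : ℝ) ^ (N + 1)) x⁻¹ :=
        integral_mono_of_nonneg (.of_forall fun x => by positivity)
          ((integrableOn_min_inv (by positivity) _).const_mul C)
          (by filter_upwards [ae_restrict_mem measurableSet_Ioc] with x hx using hbound x hx)
    _ = C * ∫ x in Ioc (0 : ℝ) (π / 4), min ((2 : ℝ) ^ (N + 1)) x⁻¹ := integral_const_mul _ _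
    _ ≤ C * (3 * N) := by gcongr; exact integral_Ioc_min_two_pow_inv_le (by omega)
    _ = C * 3 * N := by ring
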